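/- Let (X, ‖·‖) be a Banach space, τ a Hausdorff locally convex topology on X such that τ-bounded sets are ‖·‖-bounded, and (S(t))_{t≥0} a semigroup of bounded operators on X (S(0) = id, S(t)S(s) = S(t+s)). If t ↦ S(t)x is τ-continuous for every x ∈ X, then there exist K ≥ 1 and ω ≥ 0 such that ‖S(t)‖ ≤ K e^{ωt} for all t ≥ 0. -/

import Mathlib

open Filter Topology

/-- Wrapper for an auxiliary topology on `X`, so that it is not picked up by instance
resolution. -/
structure AuxTopology (X : Type*) where
  top : TopologicalSpace X

lemma aux_compact_isVonNBounded {Y : Type*} [AddCommGroup Y] [Module ℝ Y] [TopologicalSpace Y]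
    [IsTopologicalAddGroup Y] [ContinuousSMul ℝ Y] {s : Set Y} (hs : IsCompact s) :
    Bornology.IsVonNBounded ℝ s := by
  letI : UniformSpace Y := IsTopologicalAddGroup.rightUniformSpace Y
  haveI : IsUniformAddGroup Y := isUniformAddGroup_of_addCommGroup
  exact hs.totallyBounded.isVonNBounded ℝ

theorem semigroup_exponentially_bounded_of_tau_strongly_continuous
    {X : Type*} [NormedAddCommGroup X] [NormedSpace ℝ X] [CompleteSpace X]
    (τ : AuxTopology X)
    (hgrp : @IsTopologicalAddGroup X τ.top _) (hsmul : @ContinuousSMul ℝ X _ _ τ.top)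
    (hT2 : @T2Space X τ.top) (hlc : @LocallyConvexSpace ℝ X _ _ _ _ τ.top)
    (hbdd : ∀ s : Set X, @Bornology.IsVonNBounded ℝ X _ _ _ τ.top s → Bornology.IsBounded s)
    (S : ℝ → X →L[ℝ] X)
    (hS0 : S 0 = ContinuousLinearMap.id ℝ X)
    (hsg : ∀ t s : ℝ, 0 ≤ t → 0 ≤ s → ∀ x : X, S t (S s x) = S (t + s) x)
    (hcont : ∀ x : X, @ContinuousOn ℝ X _ τ.top (fun t => S t x) (Set.Ici 0)) :
    ∃ K : ℝ, 1 ≤ K ∧ ∃ ω : ℝ, 0 ≤ ω ∧ ∀ t : ℝ, 0 ≤ t → ‖S t‖ ≤ K * Real.exp (ω * t) := by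
  -- pointwise boundedness on [0,1]
  have hC : ∀ x : X, ∃ C, ∀ t : Set.Icc (0:ℝ) 1, ‖S t x‖ ≤ C := by
    intro x
    have hcomp : @IsCompact X τ.top ((fun t => S t x) '' Set.Icc 0 1) :=
      @IsCompact.image_of_continuousOn ℝ X _ τ.top _ _ isCompact_Icc
        (@ContinuousOn.mono ℝ X _ τ.top _ _ _ (hcont x) Set.Icc_subset_Ici_self)
    have hb : Bornology.IsBounded ((fun t => S t x) '' Set.Icc 0 1) :=
      hbdd _ (@aux_compact_isVonNBounded X _ _ τ.top hgrp hsmul _ hcomp)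
    rcases (isBounded_iff_forall_norm_le.mp hb) with ⟨C, hCb⟩
    exact ⟨C, fun t => hCb _ ⟨t, t.2, rfl⟩⟩
  obtain ⟨M, hM⟩ := banach_steinhaus (g := fun t : Set.Icc (0:ℝ) 1 => S t) hC
  set K : ℝ := max M 1 with hK
  have hK1 : (1:ℝ) ≤ K := le_max_right _ _
  have hK0 : (0:ℝ) < K := lt_of_lt_of_le one_pos hK1
  have hMK : ∀ t : ℝ, 0 ≤ t → t ≤ 1 → ‖S t‖ ≤ K := fun t h0 h1 =>
    le_trans (hM ⟨t, h0, h1⟩) (le_max_left _ _)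
  -- key induction
  have key : ∀ n : ℕ, ∀ s : ℝ, 0 ≤ s → s ≤ 1 → ‖S (s + n)‖ ≤ K ^ (n + 1) := by
    intro n
    induction n with
    | zero => intro s h0 h1; simpa using hMK s h0 h1
    | succ n ih =>
      intro s h0 h1
      apply ContinuousLinearMap.opNorm_le_bound _ (by positivity)
      intro x
      have heq : S (s + n) (S 1 x) = S (s + (n + 1 : ℕ)) x := by
        rw [hsg (s + n) 1 (by positivity) zero_le_one x]
        push_cast; ring_nf
      calc ‖S (s + (n + 1 : ℕ)) x‖ = ‖S (s + n) (S 1 x)‖ := by rw [heq]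
        _ ≤ ‖S (s + n)‖ * ‖S 1 x‖ := (S (s + n)).le_opNorm _
        _ ≤ K ^ (n + 1) * (K * ‖x‖) := by
            apply mul_le_mul (ih s h0 h1) ?_ (norm_nonneg _) (by positivity)
            calc ‖S 1 x‖ ≤ ‖S 1‖ * ‖x‖ := (S 1).le_opNorm x
              _ ≤ K * ‖x‖ := by
                  exact mul_le_mul_of_nonneg_right (hMK 1 zero_le_one le_rfl) (norm_nonneg _)
        _ = K ^ (n + 1 + 1) * ‖x‖ := by ring
  refine ⟨K, hK1, Real.log K, Real.log_nonneg hK1, fun t ht => ?_⟩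
  set n : ℕ := ⌊t⌋₊ with hn
  have hnt : (n : ℝ) ≤ t := Nat.floor_le ht
  have hs0 : 0 ≤ t - n := by linarith
  have hs1 : t - n ≤ 1 := by
    have := Nat.lt_floor_add_one t
    linarith
  have h1 : ‖S t‖ ≤ K ^ (n + 1) := by
    have := key n (t - n) hs0 hs1
    simpa using this
  have h2 : K ^ (n + 1) = K * Real.exp ((n : ℝ) * Real.log K) := by
    rw [Real.exp_nat_mul, Real.exp_log hK0, pow_succ, mul_comm]
  have h3 : Real.exp ((n : ℝ) * Real.log K) ≤ Real.exp (Real.log K * t) := by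
    apply Real.exp_le_exp.mpr
    rw [mul_comm]
    exact mul_le_mul_of_nonneg_left hnt (Real.log_nonneg hK1)
  calc ‖S t‖ ≤ K ^ (n + 1) := h1
    _ = K * Real.exp ((n : ℝ) * Real.log K) := h2
    _ ≤ K * Real.exp (Real.log K * t) := by
        exact mul_le_mul_of_nonneg_left h3 (le_of_lt hK0)
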